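/- arXiv:1405.2601 — 5 statements merged into one kernel-verified Lean document; each statement's English description precedes it below -/
import Mathlib

section
/- For any random variable X (discrete or continuous), the expected value of its mid-distribution function evaluated at X equals 1/2; that is, E[F^mid(X)] = 1/2, where F^mid(x) = F(x) - 0.5·P(X = x). -/
open MeasureTheory Set

/-- The expected value of the mid-distribution function `Fᵐⁱᵈ(x) = F(x) - P(X = x)/2`
evaluated at `X` equals `1/2`, for any real random variable `X` with law `μ`. -/
theorem lp_mean_mid_distribution (μ : Measure ℝ) [IsProbabilityMeasure μ] :
    ∫ x, ((μ (Iic x)).toReal - (μ {x}).toReal / 2) ∂μ = 1 / 2 := by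
  -- measurability of x ↦ μ (Iic x) and x ↦ μ {x}
  have hF : Measurable fun x : ℝ => μ (Iic x) :=
    Monotone.measurable fun a b hab => measure_mono (Iic_subset_Iic.2 hab)
  have hIio : Measurable fun x : ℝ => μ (Iio x) :=
    Monotone.measurable fun a b hab => measure_mono (Iio_subset_Iio hab)
  have hsplit : ∀ x : ℝ, μ (Iic x) = μ (Iio x) + μ {x} := by
    intro x
    rw [← Iio_union_right, measure_union (by simp) (measurableSet_singleton x)]
  have hPeq : (fun x : ℝ => μ {x}) = fun x => μ (Iic x) - μ (Iio x) := by
    funext x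
    rw [hsplit x, ENNReal.add_sub_cancel_left (measure_ne_top μ _)]
  have hP : Measurable fun x : ℝ => μ {x} := by
    rw [hPeq]; exact hF.sub hIio
  -- Fubini identifications
  have hsle : MeasurableSet {p : ℝ × ℝ | p.2 ≤ p.1} :=
    measurableSet_le measurable_snd measurable_fst
  have hslt : MeasurableSet {p : ℝ × ℝ | p.1 ≤ p.2} :=
    measurableSet_le measurable_fst measurable_snd
  have hdiag : MeasurableSet (diagonal ℝ) :=
    measurableSet_eq_fun measurable_fst measurable_snd
  have hA : ∫⁻ x, μ (Iic x) ∂μ = (μ.prod μ) {p : ℝ × ℝ | p.2 ≤ p.1} := by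
    rw [Measure.prod_apply hsle]
    rfl
  have hD : ∫⁻ x, μ {x} ∂μ = (μ.prod μ) (diagonal ℝ) := by
    rw [Measure.prod_apply hdiag]
    congr 1
    funext x
    congr 1
    ext y
    simp [diagonal, eq_comm]
  have hswap : (μ.prod μ) {p : ℝ × ℝ | p.1 ≤ p.2} = (μ.prod μ) {p : ℝ × ℝ | p.2 ≤ p.1} := by
    conv_lhs => rw [← Measure.prod_swap]
    rw [Measure.map_apply measurable_swap hslt]
    rfl
  have hkey : (μ.prod μ) {p : ℝ × ℝ | p.2 ≤ p.1} + (μ.prod μ) {p : ℝ × ℝ | p.1 ≤ p.2}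
      = 1 + (μ.prod μ) (diagonal ℝ) := by
    rw [← measure_union_add_inter _ hslt]
    have hu : {p : ℝ × ℝ | p.2 ≤ p.1} ∪ {p : ℝ × ℝ | p.1 ≤ p.2} = univ := by
      ext p; simp [le_total]
    have hi : {p : ℝ × ℝ | p.2 ≤ p.1} ∩ {p : ℝ × ℝ | p.1 ≤ p.2} = diagonal ℝ := by
      ext p
      simp only [mem_inter_iff, mem_setOf_eq, mem_diagonal_iff]
      constructor
      · rintro ⟨h1, h2⟩; exact le_antisymm h2 h1
      · rintro h; exact ⟨h.ge, h.le⟩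
    rw [hu, hi, measure_univ]
  -- key equation: 2A = 1 + D
  have hkey2 : (∫⁻ x, μ (Iic x) ∂μ) + (∫⁻ x, μ (Iic x) ∂μ) = 1 + ∫⁻ x, μ {x} ∂μ := by
    rw [hA, hD, ← hswap] at *
    rw [hswap]
    exact hkey
  -- finiteness
  have hAfin : (∫⁻ x, μ (Iic x) ∂μ) ≠ ⊤ := by
    refine ne_top_of_le_ne_top ENNReal.one_ne_top ?_
    refine le_trans (lintegral_mono fun x => prob_le_one) (by simp)
  have hDfin : (∫⁻ x, μ {x} ∂μ) ≠ ⊤ := by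
    refine ne_top_of_le_ne_top ENNReal.one_ne_top ?_
    refine le_trans (lintegral_mono fun x => prob_le_one) (by simp)
  -- integrability
  have intF : Integrable (fun x => (μ (Iic x)).toReal) μ :=
    integrable_toReal_of_lintegral_ne_top hF.aemeasurable hAfin
  have intP : Integrable (fun x => (μ {x}).toReal) μ :=
    integrable_toReal_of_lintegral_ne_top hP.aemeasurable hDfin
  have h1 : ∫ x, (μ (Iic x)).toReal ∂μ = (∫⁻ x, μ (Iic x) ∂μ).toReal :=
    integral_toReal hF.aemeasurable (Filter.Eventually.of_forall fun x => measure_lt_top μ _)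
  have h2 : ∫ x, (μ {x}).toReal ∂μ = (∫⁻ x, μ {x} ∂μ).toReal :=
    integral_toReal hP.aemeasurable (Filter.Eventually.of_forall fun x => measure_lt_top μ _)
  rw [integral_sub intF (intP.div_const 2), integral_div, h1, h2]
  -- arithmetic
  have := congrArg ENNReal.toReal hkey2
  rw [ENNReal.toReal_add hAfin hAfin, ENNReal.toReal_add (by simp) hDfin] at this
  simp only [ENNReal.toReal_one] at this
  linarith
end

section
/- For any random variable X, the variance of the mid-distribution transform F^mid(X) equals (1 - Σ_x p(x)^3)/12, where the sum ranges over all atoms x of X. -/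
/-!
Write `h a b` for `1`, `1/2` or `0` according as `a < b`, `a = b` or `a > b`, so that
`Fᵐⁱᵈ(x) = E[h Y x]` and `h a b + h b a = 1`; the latter gives `E[Fᵐⁱᵈ(X)] = 1/2`.
For `X, Y, Z` i.i.d. with law `μ`, `E[Fᵐⁱᵈ(X)²] = E[h Y X · h Z X]`, and the sum of this
product over the three cyclic relabellings of `(X, Y, Z)` is `1`, except on `{X = Y = Z}` where
it is `3/4`. The relabellings preserve the law of `(X, Y, Z)`, so
`3 E[Fᵐⁱᵈ(X)²] = 1 - P(X = Y = Z)/4`, and `P(X = Y = Z) = ∑ₓ p(x)³`.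
The variance is then `E[Fᵐⁱᵈ(X)²] - 1/4`.
-/

open MeasureTheory Set

noncomputable def halfStep (a b : ℝ) : ℝ := if a < b then 1 else if a = b then 1 / 2 else 0

theorem halfStep_of_lt {a b : ℝ} (h : a < b) : halfStep a b = 1 := if_pos h

theorem halfStep_self (a : ℝ) : halfStep a a = 1 / 2 := by simp [halfStep]

theorem halfStep_of_gt {a b : ℝ} (h : b < a) : halfStep a b = 0 := by
  simp [halfStep, h.not_gt, h.ne']

theorem halfStep_add_halfStep_swap (a b : ℝ) : halfStep a b + halfStep b a = 1 := by
  rcases lt_trichotomy a b with h | rfl | h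
  · rw [halfStep_of_lt h, halfStep_of_gt h]; norm_num
  · rw [halfStep_self]; norm_num
  · rw [halfStep_of_gt h, halfStep_of_lt h]; norm_num

theorem halfStep_cyclic_sum (x y z : ℝ) :
    halfStep y x * halfStep z x + halfStep z y * halfStep x y + halfStep x z * halfStep y z
      = 1 - (if y = x ∧ z = x then 1 else 0) / 4 := by
  rcases lt_trichotomy x y with h₁ | h₁ | h₁ <;>
    rcases lt_trichotomy y z with h₂ | h₂ | h₂ <;>
    rcases lt_trichotomy x z with h₃ | h₃ | h₃ <;> subst_vars <;>
    first
    | (exfalso; linarith)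
    | norm_num [halfStep_of_lt, halfStep_of_gt, halfStep_self, *, ne_of_gt, ne_of_lt]

theorem norm_halfStep_le_one (a b : ℝ) : ‖halfStep a b‖ ≤ 1 := by
  unfold halfStep; split_ifs <;> norm_num

section Measurability

variable {α : Type*} [MeasurableSpace α] {f g : α → ℝ}

@[fun_prop]
theorem Measurable.halfStep (hf : Measurable f) (hg : Measurable g) :
    Measurable fun x => halfStep (f x) (g x) :=
  Measurable.ite (measurableSet_lt hf hg) measurable_const
    (Measurable.ite (measurableSet_eq_fun hf hg) measurable_const measurable_const)

theorem integrable_halfStep {ν : Measure α} [IsFiniteMeasure ν] (hf : Measurable f)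
    (hg : Measurable g) : Integrable (fun p => halfStep (f p) (g p)) ν :=
  .of_bound (hf.halfStep hg).aestronglyMeasurable 1
    (ae_of_all _ fun _ => norm_halfStep_le_one _ _)

end Measurability

noncomputable def midCDF (μ : Measure ℝ) (x : ℝ) : ℝ := μ.real (Iic x) - μ.real {x} / 2

theorem integral_halfStep_left {μ : Measure ℝ} [IsFiniteMeasure μ] (x : ℝ) :
    ∫ y, halfStep y x ∂μ = midCDF μ x := by
  have hsplit : (fun y => halfStep y x) = fun y =>
      (Iio x).indicator (fun _ => 1) y + ({x} : Set ℝ).indicator (fun _ => 1 / 2) y := by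
    ext y
    rcases lt_trichotomy y x with h | rfl | h
    · simp [halfStep_of_lt h, h, h.ne]
    · simp [halfStep_self]
    · simp [halfStep_of_gt h, h.not_gt, h.ne']
  rw [hsplit, integral_add ((integrable_const _).indicator measurableSet_Iio)
      ((integrable_const _).indicator (measurableSet_singleton x)),
    integral_indicator_const _ measurableSet_Iio,
    integral_indicator_const _ (measurableSet_singleton x), midCDF, ← Iio_union_right,
    measureReal_union (by simp) (measurableSet_singleton x)]
  simp
  ring

section TripleProduct

variable {α β γ : Type*} [MeasurableSpace α] [MeasurableSpace β] [MeasurableSpace γ]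

theorem integral_prod_prod_mul {μ : Measure α} {ν : Measure β} {ρ : Measure γ}
    [SFinite μ] [SFinite ν] [SFinite ρ] (f : α → β → ℝ) (g : α → γ → ℝ)
    (hfg : Integrable (fun p => f p.1 p.2.1 * g p.1 p.2.2) (μ.prod (ν.prod ρ))) :
    ∫ p, f p.1 p.2.1 * g p.1 p.2.2 ∂μ.prod (ν.prod ρ)
      = ∫ x, (∫ y, f x y ∂ν) * ∫ z, g x z ∂ρ ∂μ := by
  rw [integral_prod _ hfg]
  simp_rw [integral_prod_mul]

theorem measurePreserving_prodComm_trans_prodAssoc (μ : Measure α) [SFinite μ] :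
    MeasurePreserving (MeasurableEquiv.prodComm.trans MeasurableEquiv.prodAssoc :
      α × α × α ≃ᵐ α × α × α) (μ.prod (μ.prod μ)) (μ.prod (μ.prod μ)) :=
  (measurePreserving_prodAssoc μ μ μ).comp Measure.measurePreserving_swap

theorem three_mul_integral_eq_integral_of_cyclic_sum (μ : Measure α) [SFinite μ]
    {f g : α × α × α → ℝ} (hf : Integrable f (μ.prod (μ.prod μ)))
    (hfg : ∀ p, f p + f (p.2.1, p.2.2, p.1) + f (p.2.2, p.1, p.2.1) = g p) :
    3 * ∫ p, f p ∂μ.prod (μ.prod μ) = ∫ p, g p ∂μ.prod (μ.prod μ) := by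
  have hrot := measurePreserving_prodComm_trans_prodAssoc μ
  have hf₁ : Integrable (fun p => f (p.2.1, p.2.2, p.1)) (μ.prod (μ.prod μ)) :=
    hrot.integrable_comp_of_integrable hf
  have hf₂ : Integrable (fun p => f (p.2.2, p.1, p.2.1)) (μ.prod (μ.prod μ)) :=
    hrot.integrable_comp_of_integrable hf₁
  have hf₀₁ : Integrable (fun p => f p + f (p.2.1, p.2.2, p.1)) (μ.prod (μ.prod μ)) :=
    hf.add hf₁
  have hint₁ :
      ∫ p, f (p.2.1, p.2.2, p.1) ∂μ.prod (μ.prod μ) = ∫ p, f p ∂μ.prod (μ.prod μ) :=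
    hrot.integral_comp' f
  have hint₂ :
      ∫ p, f (p.2.2, p.1, p.2.1) ∂μ.prod (μ.prod μ) = ∫ p, f p ∂μ.prod (μ.prod μ) :=
    (hrot.integral_comp' fun p => f (p.2.1, p.2.2, p.1)).trans hint₁
  simp_rw [← hfg]
  rw [integral_add hf₀₁ hf₂, integral_add hf hf₁, hint₁, hint₂]
  ring

end TripleProduct

section Atoms

variable {α : Type*} [MeasurableSpace α] (μ : Measure α) [IsFiniteMeasure μ]

theorem integral_measureReal_singleton_sq [MeasurableSingletonClass α] :
    ∫ x, μ.real {x} ^ 2 ∂μ = ∑' x, μ.real {x} ^ 3 := by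
  set atoms := {x | 0 < μ {x}}
  have hcount : atoms.Countable :=
    Measure.countable_meas_pos_of_disjoint_iUnion (fun _ => measurableSet_singleton _)
      fun _ _ h => disjoint_singleton.2 h
  have hzero : ∀ x ∉ atoms, μ.real {x} = 0 := fun x hx =>
    (measureReal_eq_zero_iff).2 (by simpa [atoms] using hx)
  have hint : Integrable (fun x => μ.real {x} ^ 2) μ := by
    refine Integrable.of_bound (measurable_const.measurable_of_countable_ne (f := 0)
      (hcount.mono fun x hx => ?_)).aestronglyMeasurable (μ.real univ ^ 2)
      (ae_of_all _ fun x => ?_)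
    · by_contra h
      simp [hzero x h] at hx
    · rw [norm_pow, Real.norm_of_nonneg measureReal_nonneg]
      exact pow_le_pow_left₀ measureReal_nonneg (measureReal_mono (subset_univ _)) 2
  calc ∫ x, μ.real {x} ^ 2 ∂μ = ∫ x in atoms, μ.real {x} ^ 2 ∂μ :=
        (setIntegral_eq_integral_of_forall_compl_eq_zero fun x hx => by simp [hzero x hx]).symm
    _ = ∑' x : atoms, μ.real {(x : α)} • μ.real {(x : α)} ^ 2 :=
        setIntegral_countable _ hcount hint.integrableOn
    _ = ∑' x, μ.real {x} ^ 3 := by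
        rw [← tsum_subtype_eq_of_support_subset (s := atoms) fun x hx => ?_]
        · simp only [smul_eq_mul]; congr; ext; ring
        · by_contra h
          simp [hzero x h] at hx

theorem measurableSet_setOf_eq_and_eq [MeasurableEq α] :
    MeasurableSet {p : α × α × α | p.2.1 = p.1 ∧ p.2.2 = p.1} :=
  (measurableSet_eq_fun (by fun_prop) (by fun_prop)).inter
    (measurableSet_eq_fun (by fun_prop) (by fun_prop))

theorem measureReal_prod_prod_setOf_eq_and_eq [MeasurableEq α] :
    (μ.prod (μ.prod μ)).real {p | p.2.1 = p.1 ∧ p.2.2 = p.1} = ∑' x, μ.real {x} ^ 3 := by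
  have hdiag := measurableSet_setOf_eq_and_eq (α := α)
  have hprod (p : α × α × α) : {p : α × α × α | p.2.1 = p.1 ∧ p.2.2 = p.1}.indicator 1 p
      = ({p.1} : Set α).indicator (1 : α → ℝ) p.2.1 * ({p.1} : Set α).indicator 1 p.2.2 := by
    by_cases h₁ : p.2.1 = p.1 <;> by_cases h₂ : p.2.2 = p.1 <;> simp [h₁, h₂]
  have hint := ((integrable_const (1 : ℝ) (μ := μ.prod (μ.prod μ))).indicator hdiag).congr
    (ae_of_all _ hprod)
  rw [← integral_indicator_one hdiag, integral_congr_ae (ae_of_all _ hprod),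
    integral_prod_prod_mul (fun x => ({x} : Set α).indicator 1)
      (fun x => ({x} : Set α).indicator 1) hint, ← integral_measureReal_singleton_sq]
  simp only [integral_indicator_one (measurableSet_singleton _), sq]

end Atoms

section MidCDF

variable {μ : Measure ℝ} [IsProbabilityMeasure μ]

theorem measurable_midCDF : Measurable (midCDF μ) := by
  simp_rw [funext fun x => (integral_halfStep_left (μ := μ) x).symm]
  exact (measurable_snd.halfStep measurable_fst).stronglyMeasurable.integral_prod_right'.measurable

theorem norm_midCDF_le_one (x : ℝ) : ‖midCDF μ x‖ ≤ 1 := by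
  simpa [← integral_halfStep_left] using
    norm_integral_le_of_norm_le_const (μ := μ) (ae_of_all _ fun y => norm_halfStep_le_one y x)

theorem memLp_midCDF : MemLp (midCDF μ) 2 μ :=
  .of_bound measurable_midCDF.aestronglyMeasurable 1 (ae_of_all _ norm_midCDF_le_one)

theorem integral_midCDF : ∫ x, midCDF μ x ∂μ = 1 / 2 := by
  have hprod : ∫ x, midCDF μ x ∂μ = ∫ p, halfStep p.2 p.1 ∂μ.prod μ := by
    rw [integral_prod _ (integrable_halfStep measurable_snd measurable_fst)]
    simp only [integral_halfStep_left]
  have hswap : ∫ p, halfStep p.1 p.2 ∂μ.prod μ = ∫ p, halfStep p.2 p.1 ∂μ.prod μ :=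
    (integral_prod_swap _).symm
  have hsum : ∫ p, halfStep p.1 p.2 + halfStep p.2 p.1 ∂μ.prod μ = 1 := by
    simp [halfStep_add_halfStep_swap]
  rw [integral_add (integrable_halfStep measurable_fst measurable_snd)
    (integrable_halfStep measurable_snd measurable_fst)] at hsum
  linarith

theorem three_mul_integral_midCDF_sq :
    3 * ∫ x, midCDF μ x ^ 2 ∂μ = 1 - (∑' x, μ.real {x} ^ 3) / 4 := by
  set D := {p : ℝ × ℝ × ℝ | p.2.1 = p.1 ∧ p.2.2 = p.1}
  have hD : MeasurableSet D := measurableSet_setOf_eq_and_eq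
  have hT : Integrable (fun p : ℝ × ℝ × ℝ => halfStep p.2.1 p.1 * halfStep p.2.2 p.1)
      (μ.prod (μ.prod μ)) :=
    (integrable_halfStep (by fun_prop) (by fun_prop)).bdd_mul
      (Measurable.halfStep (by fun_prop) (by fun_prop)).aestronglyMeasurable
      (ae_of_all _ fun _ => norm_halfStep_le_one _ _)
  calc 3 * ∫ x, midCDF μ x ^ 2 ∂μ
      = 3 * ∫ p, halfStep p.2.1 p.1 * halfStep p.2.2 p.1 ∂μ.prod (μ.prod μ) := by
        rw [integral_prod_prod_mul (fun x y => halfStep y x) (fun x z => halfStep z x) hT]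
        simp only [integral_halfStep_left, sq]
    _ = ∫ p, 1 - D.indicator 1 p / 4 ∂μ.prod (μ.prod μ) :=
        three_mul_integral_eq_integral_of_cyclic_sum μ hT fun p => by
          simpa [D, indicator_apply] using halfStep_cyclic_sum p.1 p.2.1 p.2.2
    _ = 1 - (μ.prod (μ.prod μ)).real D / 4 := by
        rw [integral_sub (integrable_const 1) (((integrable_const 1).indicator hD).div_const 4),
          integral_div, integral_indicator_one hD]
        simp
    _ = 1 - (∑' x, μ.real {x} ^ 3) / 4 := by rw [measureReal_prod_prod_setOf_eq_and_eq]

end MidCDF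

/-- The variance of the mid-distribution transform `Fᵐⁱᵈ(X)` equals
`(1 - ∑_x p(x)³)/12`, where the sum ranges over the atoms of `X`. -/
theorem lp_variance_mid_distribution (μ : Measure ℝ) [IsProbabilityMeasure μ]
    (Fmid : ℝ → ℝ) (hFmid : ∀ x, Fmid x = (μ (Iic x)).toReal - (μ {x}).toReal / 2) :
    ∫ x, (Fmid x - ∫ y, Fmid y ∂μ) ^ 2 ∂μ = (1 - ∑' x : ℝ, (μ {x}).toReal ^ 3) / 12 := by
  obtain rfl : Fmid = midCDF μ := funext hFmid
  rw [← ProbabilityTheory.variance_eq_integral measurable_midCDF.aemeasurable,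
    ProbabilityTheory.variance_eq_sub memLp_midCDF]
  have hsq := three_mul_integral_midCDF_sq (μ := μ)
  simp only [measureReal_def] at hsq
  simp only [Pi.pow_apply, integral_midCDF]
  linarith
end

section
/- For any real random variable X, with probability 1 the quantile function applied to the CDF recovers X: Q(F(X)) = X almost surely, where Q(u) = inf{x : F(x) ≥ u} is the (left-continuous) quantile function. -/
open MeasureTheory Set

/-- For any real random variable with law `μ`, CDF `F` and left-continuous quantile
function `Q(u) = inf {x : F(x) ≥ u}`, one has `Q(F(X)) = X` almost surely. -/
theorem lp_quantile_cdf_recovers (μ : Measure ℝ) [IsProbabilityMeasure μ]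
    (F : ℝ → ℝ) (hF : ∀ x, F x = (μ (Iic x)).toReal)
    (Q : ℝ → ℝ) (hQ : ∀ u, Q u = sInf {x : ℝ | F x ≥ u}) :
    ∀ᵐ x ∂μ, Q (F x) = x := by
  have hmono : Monotone F := by
    intro a b hab
    rw [hF, hF]
    exact ENNReal.toReal_mono (measure_ne_top μ _)
      (measure_mono (Iic_subset_Iic.2 hab))
  -- key: if F b ≤ F a then μ (Ioc a b) = 0
  have hIoc : ∀ a b : ℝ, F b ≤ F a → μ (Ioc a b) = 0 := by
    intro a b hab
    rcases le_or_gt b a with h | h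
    · rw [Ioc_eq_empty (not_lt.2 h), measure_empty]
    · have hsub : Iic a ⊆ Iic b := Iic_subset_Iic.2 h.le
      have hle : μ (Iic b) ≤ μ (Iic a) := by
        rw [hF, hF] at hab
        exact (ENNReal.toReal_le_toReal (measure_ne_top μ _) (measure_ne_top μ _)).1 hab
      have : μ (Ioc a b) = μ (Iic b) - μ (Iic a) := by
        rw [← Iic_sdiff_Iic, measure_diff hsub measurableSet_Iic.nullMeasurableSet
          (measure_ne_top μ _)]
      rw [this]
      exact tsub_eq_zero_of_le hle
  -- each T_q is null
  have hTq : ∀ q : ℝ, μ {x | q < x ∧ F x ≤ F q} = 0 := by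
    intro q
    set T := {x | q < x ∧ F x ≤ F q} with hT
    by_cases hmax : ∃ m, IsGreatest T m
    · obtain ⟨m, hmT, hub⟩ := hmax
      have hsub : T ⊆ Ioc q m := fun x hx => ⟨hx.1, hub hx⟩
      exact measure_mono_null hsub (hIoc q m hmT.2)
    · have hsub : T ⊆ ⋃ (r : ℚ) (_ : (r : ℝ) ∈ T), Ioc q (r : ℝ) := by
        intro x hx
        have : ¬ ∀ y ∈ T, y ≤ x := fun h => hmax ⟨x, hx, h⟩
        push_neg at this
        obtain ⟨y, hyT, hxy⟩ := this
        obtain ⟨r, hr1, hr2⟩ := exists_rat_btwn hxy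
        have hrT : (r : ℝ) ∈ T := ⟨hx.1.trans hr1, (hmono hr2.le).trans hyT.2⟩
        exact mem_iUnion₂.2 ⟨r, hrT, hx.1, hr1.le⟩
      exact measure_mono_null hsub
        (measure_iUnion_null fun r => measure_iUnion_null fun hr => hIoc q r hr.2)
  -- bad set is contained in the union of T_q over rationals
  have key : {x | ¬ Q (F x) = x} ⊆ ⋃ (q : ℚ), {x | (q : ℝ) < x ∧ F x ≤ F (q : ℝ)} := by
    intro x hx
    by_contra hc
    simp only [mem_iUnion, mem_setOf_eq, not_exists, not_and, not_le] at hc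
    apply hx
    set S := {y : ℝ | F y ≥ F x} with hS
    have hxS : x ∈ S := by simp only [hS, mem_setOf_eq]; exact le_rfl
    obtain ⟨q0, hq0⟩ := exists_rat_lt x
    have hbdd : BddBelow S := by
      refine ⟨(q0 : ℝ), fun z hz => ?_⟩
      by_contra hzq
      exact absurd ((hmono (not_le.1 hzq).le).trans_lt (hc q0 hq0)) (not_lt.2 hz)
    have hle : sInf S ≤ x := csInf_le hbdd hxS
    rw [hQ]
    refine le_antisymm hle (le_of_not_gt fun hlt => ?_)
    obtain ⟨r, hr1, hr2⟩ := exists_rat_btwn hlt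
    obtain ⟨z, hzS, hzr⟩ := exists_lt_of_csInf_lt ⟨x, hxS⟩ hr1
    exact absurd ((hzS.trans (hmono hzr.le)).trans_lt (hc r hr2)) (lt_irrefl _)
  exact ae_iff.2 (measure_mono_null key (measure_iUnion_null fun q => hTq q))
end

section
/- For X ~ N(μ, σ²), the correlation between X and F(X) (where F is the CDF of X) equals √(3/π) ≈ 0.9772; equivalently LP(1;X) = √(3/π)·σ. -/
/-!
For `X ~ N(m, v)` with density `f`, integrating by parts against `-v f` (whose derivative is
`(x - m) f`) gives Stein's identity `E[(X - m) g(X)] = v E[g'(X)]` for bounded differentiable `g`.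
Applied to `g = F - 1/2` it yields `E[(X - m)(F(X) - 1/2)] = v ∫ f² = √(v / (4π))`, because `f²` is
`(4πv)^(-1/2)` times the `N(m, v/2)` density. As `F²/2` is an antiderivative of `F f`,
`E[F(X)] = 1/2`, so `E[X (F(X) - 1/2)]` has the same value; with `v = σ²` and the factor `√12`
this is `√(3/π) σ`.
-/

open MeasureTheory Set ProbabilityTheory Real
open scoped NNReal

section

variable (m : ℝ)

lemma hasDerivAt_gaussianPDFReal (v : ℝ≥0) (x : ℝ) :
    HasDerivAt (gaussianPDFReal m v) (-((x - m) / v) * gaussianPDFReal m v x) x := by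
  have hexponent : HasDerivAt (fun y => -(y - m) ^ 2 / (2 * v)) (-((x - m) / v)) x := by
    refine ((((hasDerivAt_id' x).sub_const m).pow 2).neg.div_const (2 * (v : ℝ))).congr_deriv ?_
    rw [Nat.cast_ofNat, pow_one, mul_one, neg_div, mul_div_mul_left _ _ (two_ne_zero (α := ℝ))]
  rw [gaussianPDFReal_def]
  exact (hexponent.exp.const_mul _).congr_deriv (by ring)

lemma gaussianPDFReal_sq (v : ℝ≥0) (x : ℝ) :
    gaussianPDFReal m v x ^ 2 = (√(4 * π * v))⁻¹ * gaussianPDFReal m (v / 2) x := by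
  have hsqrt : √(4 * π * v) * √(2 * π * (v / 2 : ℝ≥0)) = √(2 * π * v) ^ 2 := by
    rw [← Real.sqrt_mul (by positivity), Real.sq_sqrt (by positivity),
      show 4 * π * v * (2 * π * (v / 2 : ℝ≥0)) = (2 * π * v) ^ 2 by push_cast; ring,
      Real.sqrt_sq (by positivity)]
  simp only [gaussianPDFReal_def, mul_pow, inv_pow, ← Real.exp_nat_mul]
  rw [← hsqrt, mul_inv, mul_assoc]
  congr 3
  push_cast
  ring

variable {v : ℝ≥0}

lemma integral_gaussianPDFReal_sq (hv : v ≠ 0) :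
    ∫ x, gaussianPDFReal m v x ^ 2 = (√(4 * π * v))⁻¹ := by
  simp_rw [gaussianPDFReal_sq, integral_const_mul,
    integral_gaussianPDFReal_eq_one m (div_ne_zero hv two_ne_zero), mul_one]

lemma integrable_gaussianReal_iff (hv : v ≠ 0) {g : ℝ → ℝ} :
    Integrable g (gaussianReal m v) ↔ Integrable (fun x => gaussianPDFReal m v x * g x) := by
  rw [gaussianReal_of_var_ne_zero m hv, integrable_withDensity_iff_integrable_smul'
    (measurable_gaussianPDF m v) (ae_of_all _ fun _ => gaussianPDF_lt_top)]
  simp only [toReal_gaussianPDF, smul_eq_mul]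

lemma hasDerivAt_cdf_gaussianReal (hv : v ≠ 0) (x : ℝ) :
    HasDerivAt (cdf (gaussianReal m v)) (gaussianPDFReal m v x) x := by
  have hint := integrable_gaussianPDFReal m v
  have hcdf : ⇑(cdf (gaussianReal m v)) =
      fun x => (∫ t in Iic 0, gaussianPDFReal m v t) + ∫ t in 0..x, gaussianPDFReal m v t := by
    ext y
    rw [cdf_eq_real, measureReal_def, gaussianReal_apply_eq_integral m hv, ENNReal.toReal_ofReal
      (setIntegral_nonneg measurableSet_Iic fun t _ => gaussianPDFReal_nonneg m v t),
      ← intervalIntegral.integral_Iic_sub_Iic hint.integrableOn hint.integrableOn]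
    ring
  have hcont : Continuous (gaussianPDFReal m v) := by unfold gaussianPDFReal; fun_prop
  rw [hcdf]
  exact (intervalIntegral.integral_hasDerivAt_right hint.intervalIntegrable
    hcont.stronglyMeasurable.stronglyMeasurableAtFilter hcont.continuousAt).const_add _

lemma integrable_cdf (μ : Measure ℝ) [IsFiniteMeasure μ] : Integrable (cdf μ) μ :=
  .of_bound (cdf μ).mono.measurable.aestronglyMeasurable 1 <| ae_of_all _ fun x => by
    rw [Real.norm_of_nonneg (cdf_nonneg μ x)]
    exact cdf_le_one μ x

lemma integral_cdf_gaussianReal (hv : v ≠ 0) :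
    ∫ x, cdf (gaussianReal m v) x ∂gaussianReal m v = 1 / 2 := by
  set F := cdf (gaussianReal m v)
  have hderiv x : HasDerivAt (fun y => F y ^ 2 / 2) (gaussianPDFReal m v x • F x) x := by
    refine (((hasDerivAt_cdf_gaussianReal m hv x).pow 2).div_const 2).congr_deriv ?_
    rw [smul_eq_mul]
    ring
  have hint := (integrable_gaussianReal_iff m hv).1 (integrable_cdf (gaussianReal m v))
  have hbot := ((tendsto_cdf_atBot (gaussianReal m v)).pow 2).div_const 2
  have htop := ((tendsto_cdf_atTop (gaussianReal m v)).pow 2).div_const 2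
  rw [integral_gaussianReal_eq_integral_smul hv,
    integral_of_hasDerivAt_of_tendsto hderiv hint hbot htop]
  norm_num

lemma integrable_sub_mul_gaussianReal {g : ℝ → ℝ} {C : ℝ}
    (hg : AEStronglyMeasurable g (gaussianReal m v)) (hg_bdd : ∀ x, ‖g x‖ ≤ C) :
    Integrable (fun x => (x - m) * g x) (gaussianReal m v) :=
  ((((memLp_id_gaussianReal 1).integrable le_rfl).sub (integrable_const m)).bdd_mul hg
    (ae_of_all _ hg_bdd)).congr (ae_of_all _ fun _ => mul_comm _ _)

theorem integral_sub_mul_gaussianReal {g g' : ℝ → ℝ} {C : ℝ} (hg : ∀ x, HasDerivAt g (g' x) x)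
    (hg_bdd : ∀ x, ‖g x‖ ≤ C) (hg' : Integrable g' (gaussianReal m v)) :
    ∫ x, (x - m) * g x ∂gaussianReal m v = v * ∫ x, g' x ∂gaussianReal m v := by
  rcases eq_or_ne v 0 with rfl | hv
  · simp [gaussianReal_zero_var]
  have hg_meas : AEStronglyMeasurable g (gaussianReal m v) :=
    (continuous_iff_continuousAt.2 fun x => (hg x).continuousAt).aestronglyMeasurable
  have h1 := (integrable_gaussianReal_iff m hv).1
    (integrable_sub_mul_gaussianReal m hg_meas hg_bdd)
  have h2 := (integrable_gaussianReal_iff m hv).1 hg'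
  have h3 := (integrable_gaussianReal_iff m hv).1
    (Integrable.of_bound hg_meas C (ae_of_all _ hg_bdd))
  have hibp := integral_mul_deriv_eq_deriv_mul_of_integrable (u := g) (u' := g')
    (v := fun x => -(v : ℝ) * gaussianPDFReal m v x)
    (v' := fun x => (x - m) * gaussianPDFReal m v x) (fun x _ => hg x) (fun x _ => by
      convert (hasDerivAt_gaussianPDFReal m v x).const_mul (-(v : ℝ)) using 1
      field_simp)
    (h1.congr (ae_of_all _ fun x => by simp only [Pi.mul_apply]; ring))
    ((h2.const_mul (-v)).congr (ae_of_all _ fun x => by simp only [Pi.mul_apply]; ring))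
    ((h3.const_mul (-v)).congr (ae_of_all _ fun x => by simp only [Pi.mul_apply]; ring))
  rw [integral_gaussianReal_eq_integral_smul hv, integral_gaussianReal_eq_integral_smul hv]
  simp only [smul_eq_mul]
  calc ∫ x, gaussianPDFReal m v x * ((x - m) * g x)
      = ∫ x, g x * ((x - m) * gaussianPDFReal m v x) := by congr 1; ext x; ring
    _ = -∫ x, g' x * (-v * gaussianPDFReal m v x) := hibp
    _ = v * ∫ x, gaussianPDFReal m v x * g' x := by
      rw [← integral_const_mul, ← integral_neg]; congr 1; ext x; ring

lemma norm_cdf_sub_half_le (μ : Measure ℝ) (x : ℝ) : ‖cdf μ x - 1 / 2‖ ≤ 1 / 2 := by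
  rw [Real.norm_eq_abs, abs_le]
  constructor <;> linarith [cdf_nonneg μ x, cdf_le_one μ x]

lemma integral_sub_mul_cdf_sub_half_gaussianReal (hv : v ≠ 0) :
    ∫ x, (x - m) * (cdf (gaussianReal m v) x - 1 / 2) ∂gaussianReal m v = √(v / (4 * π)) := by
  have hpdf_sq : Integrable (fun x => gaussianPDFReal m v x * gaussianPDFReal m v x) := by
    simp_rw [← sq, gaussianPDFReal_sq]
    exact (integrable_gaussianPDFReal m (v / 2)).const_mul _
  have hpdf := (integrable_gaussianReal_iff m hv).2 hpdf_sq
  rw [integral_sub_mul_gaussianReal m (fun x => (hasDerivAt_cdf_gaussianReal m hv x).sub_const _)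
    (norm_cdf_sub_half_le _) hpdf, integral_gaussianReal_eq_integral_smul hv]
  simp only [smul_eq_mul, ← sq, integral_gaussianPDFReal_sq m hv]
  rw [Real.sqrt_div' _ (by positivity), Real.sqrt_mul' _ v.coe_nonneg]
  have : √(v : ℝ) ≠ 0 := by positivity
  field_simp
  rw [Real.sq_sqrt v.coe_nonneg]

lemma integral_mul_cdf_sub_half_gaussianReal (hv : v ≠ 0) :
    ∫ x, x * (cdf (gaussianReal m v) x - 1 / 2) ∂gaussianReal m v = √(v / (4 * π)) := by
  have hcdf : Integrable (fun x => cdf (gaussianReal m v) x - 1 / 2) (gaussianReal m v) :=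
    (integrable_cdf _).sub (integrable_const _)
  have hshift := integrable_sub_mul_gaussianReal m hcdf.aestronglyMeasurable
    (norm_cdf_sub_half_le _)
  have hmean : ∫ x, (cdf (gaussianReal m v) x - 1 / 2) ∂gaussianReal m v = 0 := by
    rw [integral_sub (integrable_cdf _) (integrable_const _), integral_cdf_gaussianReal m hv,
      integral_const, probReal_univ, one_smul, sub_self]
  calc ∫ x, x * (cdf (gaussianReal m v) x - 1 / 2) ∂gaussianReal m v
      = ∫ x, ((x - m) * (cdf (gaussianReal m v) x - 1 / 2)
          + m * (cdf (gaussianReal m v) x - 1 / 2)) ∂gaussianReal m v := by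
        congr 1; ext x; ring
    _ = √(v / (4 * π)) := by
      rw [integral_add hshift (hcdf.const_mul m), integral_const_mul,
        hmean, mul_zero, add_zero, integral_sub_mul_cdf_sub_half_gaussianReal m hv]

end

/-- For `X ~ N(m, σ²)` with CDF `F`, the first LP moment is
`LP(1;X) = E[X·√12(F(X) - 1/2)] = √(3/π)·σ`, and equivalently the correlation
of `X` and `F(X)`, namely `Cov(X, F(X))/(σ·√(1/12))`, equals `√(3/π)`. -/
theorem lp1_normal_dagostino (m : ℝ) (σ : ℝ) (hσ : 0 < σ)
    (ν : Measure ℝ) (hν : ν = gaussianReal m ((⟨σ, hσ.le⟩ : NNReal) ^ 2))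
    (F : ℝ → ℝ) (hF : ∀ x, F x = (ν (Iic x)).toReal) :
    (∫ x, x * (Real.sqrt 12 * (F x - 1 / 2)) ∂ν = Real.sqrt (3 / Real.pi) * σ) ∧
      (∫ x, (x - m) * (F x - 1 / 2) ∂ν) / (σ * Real.sqrt (1 / 12)) =
        Real.sqrt (3 / Real.pi) := by
  subst hν
  set v : ℝ≥0 := (⟨σ, hσ.le⟩ : NNReal) ^ 2
  have hvσ : (v : ℝ) = σ ^ 2 := rfl
  have hv : v ≠ 0 := pow_ne_zero 2 (ne_of_gt hσ)
  have hF_cdf : F = cdf (gaussianReal m v) :=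
    funext fun x => by rw [hF, cdf_eq_real, measureReal_def]
  have hconst : √12 * √(v / (4 * π)) = √(3 / π) * σ := by
    rw [← Real.sqrt_mul (by norm_num), hvσ, show 12 * (σ ^ 2 / (4 * π)) = 3 / π * σ ^ 2 by ring,
      Real.sqrt_mul (by positivity), Real.sqrt_sq hσ.le]
  subst hF_cdf
  constructor
  · simp_rw [mul_left_comm _ √12, integral_const_mul, integral_mul_cdf_sub_half_gaussianReal m hv,
      hconst]
  · rw [integral_sub_mul_cdf_sub_half_gaussianReal m hv, div_eq_iff (by positivity), one_div,
      Real.sqrt_inv, ← mul_assoc, ← hconst]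
    field_simp
end

section
/- For a 2×2 probability table with all P_ij > 0, the coefficient θ_{1,1} := Σ_{i,j} log(P_ij/(P_i+·P_+j))·T_1(i-1;X)·T_1(j-1;Y)·P_i+·P_+j equals log(δ)·√(P_1+·P_+1·P_2+·P_+2), where δ = (P_11·P_22)/(P_12·P_21) is the odds ratio. -/
open Finset

lemma sqrt_div_mul (a b : ℝ) (ha : 0 < a) (hb : 0 ≤ b) :
    Real.sqrt (b / a) * a = Real.sqrt a * Real.sqrt b := by
  rw [Real.sqrt_div hb, div_mul_eq_mul_div, div_eq_iff (Real.sqrt_ne_zero'.mpr ha)]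
  nlinarith [Real.mul_self_sqrt ha.le, Real.sqrt_nonneg a, Real.sqrt_nonneg b]

/-- For a 2×2 probability table with positive entries, the maximum-entropy coefficient
`θ₁₁ = ∑_{i,j} log(P_ij/(P_i₊ P₊_j)) T₁(i;X) T₁(j;Y) P_i₊ P₊_j` equals
`log(δ)·√(P₁₊ P₊₁ P₂₊ P₊₂)` where `δ = (P₁₁P₂₂)/(P₁₂P₂₁)` is the odds ratio. -/
theorem lp_theta11_odds_ratio
    (P : Fin 2 → Fin 2 → ℝ) (hpos : ∀ i j, 0 < P i j)
    (hsum : P 0 0 + P 0 1 + P 1 0 + P 1 1 = 1)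
    (r c : Fin 2 → ℝ) (hr : ∀ i, r i = P i 0 + P i 1) (hc : ∀ j, c j = P 0 j + P 1 j)
    (T1X T1Y : Fin 2 → ℝ)
    (hT1X0 : T1X 0 = -Real.sqrt (r 1 / r 0)) (hT1X1 : T1X 1 = Real.sqrt (r 0 / r 1))
    (hT1Y0 : T1Y 0 = -Real.sqrt (c 1 / c 0)) (hT1Y1 : T1Y 1 = Real.sqrt (c 0 / c 1)) :
    (∑ i : Fin 2, ∑ j : Fin 2,
        Real.log (P i j / (r i * c j)) * T1X i * T1Y j * (r i * c j)) =
      Real.log (P 0 0 * P 1 1 / (P 0 1 * P 1 0)) *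
        Real.sqrt (r 0 * c 0 * r 1 * c 1) := by
  have hr0 : 0 < r 0 := by rw [hr]; exact add_pos (hpos 0 0) (hpos 0 1)
  have hr1 : 0 < r 1 := by rw [hr]; exact add_pos (hpos 1 0) (hpos 1 1)
  have hc0 : 0 < c 0 := by rw [hc]; exact add_pos (hpos 0 0) (hpos 1 0)
  have hc1 : 0 < c 1 := by rw [hc]; exact add_pos (hpos 0 1) (hpos 1 1)
  have eX0 : Real.sqrt (r 1 / r 0) * r 0 = Real.sqrt (r 0) * Real.sqrt (r 1) :=
    sqrt_div_mul _ _ hr0 hr1.le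
  have eX1 : Real.sqrt (r 0 / r 1) * r 1 = Real.sqrt (r 0) * Real.sqrt (r 1) := by
    rw [sqrt_div_mul _ _ hr1 hr0.le, mul_comm]
  have eY0 : Real.sqrt (c 1 / c 0) * c 0 = Real.sqrt (c 0) * Real.sqrt (c 1) :=
    sqrt_div_mul _ _ hc0 hc1.le
  have eY1 : Real.sqrt (c 0 / c 1) * c 1 = Real.sqrt (c 0) * Real.sqrt (c 1) := by
    rw [sqrt_div_mul _ _ hc1 hc0.le, mul_comm]
  have eS : Real.sqrt (r 0 * c 0 * r 1 * c 1) =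
      Real.sqrt (r 0) * Real.sqrt (r 1) * (Real.sqrt (c 0) * Real.sqrt (c 1)) := by
    rw [show r 0 * c 0 * r 1 * c 1 = (r 0 * r 1) * (c 0 * c 1) by ring,
      Real.sqrt_mul (by positivity), Real.sqrt_mul hr0.le, Real.sqrt_mul hc0.le]
  have hlog : Real.log (P 0 0 * P 1 1 / (P 0 1 * P 1 0)) =
      Real.log (P 0 0 / (r 0 * c 0)) - Real.log (P 0 1 / (r 0 * c 1))
      - Real.log (P 1 0 / (r 1 * c 0)) + Real.log (P 1 1 / (r 1 * c 1)) := by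
    rw [Real.log_div (mul_pos (hpos 0 0) (hpos 1 1)).ne' (mul_pos (hpos 0 1) (hpos 1 0)).ne',
      Real.log_div (hpos 0 0).ne' (mul_pos hr0 hc0).ne',
      Real.log_div (hpos 0 1).ne' (mul_pos hr0 hc1).ne',
      Real.log_div (hpos 1 0).ne' (mul_pos hr1 hc0).ne',
      Real.log_div (hpos 1 1).ne' (mul_pos hr1 hc1).ne',
      Real.log_mul (hpos 0 0).ne' (hpos 1 1).ne',
      Real.log_mul (hpos 0 1).ne' (hpos 1 0).ne',
      Real.log_mul hr0.ne' hc0.ne', Real.log_mul hr0.ne' hc1.ne',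
      Real.log_mul hr1.ne' hc0.ne', Real.log_mul hr1.ne' hc1.ne']
    ring
  simp only [Fin.sum_univ_two, hT1X0, hT1X1, hT1Y0, hT1Y1, hlog, eS]
  linear_combination
    Real.log (P 0 0 / (r 0 * c 0)) *
      ((Real.sqrt (c 1 / c 0) * c 0) * eX0 + (Real.sqrt (r 0) * Real.sqrt (r 1)) * eY0)
    - Real.log (P 0 1 / (r 0 * c 1)) *
      ((Real.sqrt (c 0 / c 1) * c 1) * eX0 + (Real.sqrt (r 0) * Real.sqrt (r 1)) * eY1)
    - Real.log (P 1 0 / (r 1 * c 0)) *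
      ((Real.sqrt (c 1 / c 0) * c 0) * eX1 + (Real.sqrt (r 0) * Real.sqrt (r 1)) * eY0)
    + Real.log (P 1 1 / (r 1 * c 1)) *
      ((Real.sqrt (c 0 / c 1) * c 1) * eX1 + (Real.sqrt (r 0) * Real.sqrt (r 1)) * eY1)
end
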